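/- A globular set X is n-coskeletal if and only if for every k ≥ n the map X_{k+1} → X_k × X_k, c ↦ (s(c), t(c)), is injective with image exactly the set of parallel pairs of k-cells; that is, if and only if for every k ≥ n each pair of parallel k-cells (x, y) of X admits exactly one (k+1)-cell with source x and target y. -/

import Mathlib

open CategoryTheory CategoryTheory.Limits Opposite

/-- Morphisms of the globe category. -/
inductive GlobeHom : ℕ → ℕ → Type where
  | ident (m : ℕ) : GlobeHom m m
  | sig {m n : ℕ} (h : m < n) : GlobeHom m n
  | tau {m n : ℕ} (h : m < n) : GlobeHom m n

/-- Composition in the globe category: determined by the inner factor. -/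
def GlobeHom.comp : {a b c : ℕ} → GlobeHom a b → GlobeHom b c → GlobeHom a c
  | _, _, _, .ident _, g => g
  | _, _, _, .sig h, .ident _ => .sig h
  | _, _, _, .sig h, .sig h' => .sig (h.trans h')
  | _, _, _, .sig h, .tau h' => .sig (h.trans h')
  | _, _, _, .tau h, .ident _ => .tau h
  | _, _, _, .tau h, .sig h' => .tau (h.trans h')
  | _, _, _, .tau h, .tau h' => .tau (h.trans h')

lemma GlobeHom.comp_assoc : ∀ {a b c d : ℕ} (f : GlobeHom a b) (g : GlobeHom b c)
    (h : GlobeHom c d), (f.comp g).comp h = f.comp (g.comp h) := by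
  intro a b c d f g h
  cases f <;> cases g <;> cases h <;> rfl

lemma GlobeHom.le : ∀ {a b : ℕ}, GlobeHom a b → a ≤ b
  | _, _, .ident _ => le_rfl
  | _, _, .sig h => h.le
  | _, _, .tau h => h.le

/-- The globe category `G`: objects are natural numbers. -/
def Globe : Type := ℕ

instance : Category Globe where
  Hom m n := GlobeHom m n
  id m := GlobeHom.ident m
  comp f g := f.comp g
  id_comp _ := rfl
  comp_id := by rintro _ _ (_|_|_) <;> rfl
  assoc f g h := GlobeHom.comp_assoc f g h

/-- The object of `Globe` corresponding to `k : ℕ`. -/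
def gl (k : ℕ) : Globe := k

/-- The underlying natural number of an object of `Globe`. -/
def gval (m : Globe) : ℕ := m

/-- Globular sets: presheaves on the globe category. -/
abbrev GlobSet := Globeᵒᵖ ⥤ Type

/-- The source map `X_{k+1} → X_k` of a globular set. -/
def gsrc (X : GlobSet) (k : ℕ) : X.obj (op (gl (k+1))) → X.obj (op (gl k)) :=
  X.map (Quiver.Hom.op (show gl k ⟶ gl (k+1) from GlobeHom.sig (Nat.lt_succ_self k)))

/-- The target map `X_{k+1} → X_k` of a globular set. -/
def gtgt (X : GlobSet) (k : ℕ) : X.obj (op (gl (k+1))) → X.obj (op (gl k)) :=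
  X.map (Quiver.Hom.op (show gl k ⟶ gl (k+1) from GlobeHom.tau (Nat.lt_succ_self k)))

/-- Two `k`-cells are parallel if `k = 0` or they have the same source and target. -/
def Parallel (X : GlobSet) : (k : ℕ) → X.obj (op (gl k)) → X.obj (op (gl k)) → Prop
  | 0, _, _ => True
  | (k+1), x, y => gsrc X k x = gsrc X k y ∧ gtgt X k x = gtgt X k y

/-- The full subcategory `G_n` of the globe category on objects `≤ n`. -/
def GlobeLE (n : ℕ) := ObjectProperty.FullSubcategory (fun m : Globe => gval m ≤ n)

instance (n : ℕ) : Category (GlobeLE n) := ObjectProperty.FullSubcategory.category _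

/-- The inclusion `ι_n : G_n ⥤ G`. -/
def iotaGlobe (n : ℕ) : GlobeLE n ⥤ Globe := ObjectProperty.ι _

/-- A morphism of globes coming from an equality of dimensions. -/
def GlobeHom.ofEq : {a b : ℕ} → a = b → GlobeHom a b
  | _, _, rfl => .ident _

/-- A tag distinguishing the three kinds of globe morphisms. -/
def GlobeHom.tag : {a b : ℕ} → GlobeHom a b → ℕ
  | _, _, .ident _ => 0
  | _, _, .sig _ => 1
  | _, _, .tau _ => 2

lemma GlobeHom.ext_tag : ∀ {a b : ℕ} (f g : GlobeHom a b), f.tag = g.tag → f = g := by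
  intro a b f g h
  cases f <;> cases g <;> simp_all [GlobeHom.tag]

lemma GlobeHom.tag_comp : ∀ {a b c : ℕ} (f : GlobeHom a b) (g : GlobeHom b c),
    (f.comp g).tag = if f.tag = 0 then g.tag else f.tag := by
  intro a b c f g
  cases f <;> cases g <;> simp [GlobeHom.comp, GlobeHom.tag]

lemma GlobeHom.tag_ofEq {a b : ℕ} (h : a = b) : (GlobeHom.ofEq h).tag = 0 := by
  cases h; rfl

/-- The truncation of a globe morphism. -/
def GlobeHom.trunc (n : ℕ) : {a b : ℕ} → GlobeHom a b → GlobeHom (min a n) (min b n)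
  | _, _, .ident m => .ident _
  | a, b, .sig h => if h' : min a n < min b n then .sig h' else .ofEq (by omega)
  | a, b, .tau h => if h' : min a n < min b n then .tau h' else .ofEq (by omega)

lemma GlobeHom.tag_trunc (n : ℕ) : ∀ {a b : ℕ} (f : GlobeHom a b),
    (f.trunc n).tag = if min a n < min b n then f.tag else 0 := by
  intro a b f
  cases f with
  | ident => simp [GlobeHom.trunc, GlobeHom.tag]
  | sig h =>
      rw [GlobeHom.trunc]
      split
      · simp_all [GlobeHom.tag]
      · rw [GlobeHom.tag_ofEq]
  | tau h =>
      rw [GlobeHom.trunc]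
      split
      · simp_all [GlobeHom.tag]
      · rw [GlobeHom.tag_ofEq]

/-- The truncation functor `t_n : G ⥤ G_n`. -/
def truncFunctor (n : ℕ) : Globe ⥤ GlobeLE n where
  obj k := ⟨gl (min (gval k) n), min_le_right _ _⟩
  map {a b} f := ObjectProperty.homMk (GlobeHom.trunc n f)
  map_id _ := rfl
  map_comp {a b c} f g := by
    apply ObjectProperty.hom_ext
    apply GlobeHom.ext_tag
    have hab := GlobeHom.le f
    have hbc := GlobeHom.le g
    show ((GlobeHom.comp (f : GlobeHom (gval a) (gval b)) (g : GlobeHom (gval b) (gval c))).trunc n).tag =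
      (((f : GlobeHom (gval a) (gval b)).trunc n).comp ((g : GlobeHom (gval b) (gval c)).trunc n)).tag
    erw [GlobeHom.tag_trunc, GlobeHom.tag_comp, GlobeHom.tag_comp, GlobeHom.tag_trunc,
      GlobeHom.tag_trunc]
    revert f g
    show ∀ (f : GlobeHom a b) (g : GlobeHom b c), _
    intro f g
    cases f <;> cases g <;> simp [GlobeHom.tag] <;> split_ifs <;> omega

/-- The precomposition functor `t_n^*`. -/
def tStar (n : ℕ) : ((GlobeLE n)ᵒᵖ ⥤ Type) ⥤ GlobSet :=
  (Functor.whiskeringLeft _ _ _).obj (truncFunctor n).op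

/-- The left Kan extension functor `t_{n!}`, left adjoint of `t_n^*`. -/
noncomputable def tLan (n : ℕ) : GlobSet ⥤ ((GlobeLE n)ᵒᵖ ⥤ Type) :=
  (truncFunctor n).op.lan

/-- The adjunction `t_{n!} ⊣ t_n^*`. -/
noncomputable def tAdj (n : ℕ) : tLan n ⊣ tStar n :=
  Functor.lanAdjunction _ _

/-- A globular set is `n`-truncated if the unit of `t_{n!} ⊣ t_n^*` is an isomorphism at it. -/
def IsTruncated (n : ℕ) (X : GlobSet) : Prop := IsIso ((tAdj n).unit.app X)

/-- The restriction functor `ι_n^*`. -/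
def iotaStar (n : ℕ) : GlobSet ⥤ ((GlobeLE n)ᵒᵖ ⥤ Type) :=
  (Functor.whiskeringLeft _ _ _).obj (iotaGlobe n).op

/-- The right Kan extension functor `ι_{n*}`, right adjoint of `ι_n^*`. -/
noncomputable def iotaRan (n : ℕ) : ((GlobeLE n)ᵒᵖ ⥤ Type) ⥤ GlobSet :=
  (iotaGlobe n).op.ran

/-- The adjunction `ι_n^* ⊣ ι_{n*}`. -/
noncomputable def iotaAdj (n : ℕ) : iotaStar n ⊣ iotaRan n :=
  Functor.ranAdjunction _ _

/-- A globular set is `n`-coskeletal if the unit of `ι_n^* ⊣ ι_{n*}` is an isomorphism at it. -/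
def IsCoskeletal (n : ℕ) (X : GlobSet) : Prop := IsIso ((iotaAdj n).unit.app X)

/-- The representable globular set `D_k`. -/
def disk (k : ℕ) : GlobSet := yoneda.obj (gl k)

/-- The boundary `∂D_k` of the `k`-disk. -/
def boundary (k : ℕ) : GlobSet where
  obj m := { f : GlobeHom (gval m.unop) k // gval m.unop < k }
  map {m m'} g := TypeCat.ofHom (fun f => ⟨GlobeHom.comp g.unop f.1, lt_of_le_of_lt (GlobeHom.le g.unop) f.2⟩)
  map_id m := by ext f; rfl
  map_comp {m m' m''} g h := by
    ext f; exact (GlobeHom.comp_assoc h.unop g.unop f.1)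

/-- The boundary inclusion `∂D_k ⟶ D_k`. -/
def boundaryIncl (k : ℕ) : boundary k ⟶ disk k where
  app m := TypeCat.ofHom (fun f => f.1)
  naturality m m' g := by ext f; rfl

/-!
By the Yoneda lemma and the adjunction `ι_n^* ⊣ ι_{n*}`, the unit at `X` is bijective in
degree `m` iff every morphism `ι_n^* D_m ⟶ ι_n^* X` extends uniquely to a morphism
`D_m ⟶ X`. For `m ≤ n` this always holds because `ι_n` is fully faithful. For `m > n` the
restricted disk `ι_n^* D_m` has just the two cells `σ` and `τ` in each dimension, so morphisms
`ι_n^* D_m ⟶ ι_n^* X` are parallel pairs of `n`-cells and the condition says that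
`c ↦ (σ c, τ c)` is a bijection from `X_m` onto the parallel pairs of `n`-cells.
Once `X_{k+1}` is in bijection with the parallel pairs of `k`-cells, parallel `(k+1)`-cells
coincide, so parallel pairs of `(k+1)`-cells correspond to parallel pairs of `k`-cells; this
trades the conditions for all `m > n` against those for `m = k + 1` with `k ≥ n`.
-/

lemma CategoryTheory.Adjunction.isIso_unit_app_app_iff {C D : Type*} [Category C]
    [Category D] {L : (Cᵒᵖ ⥤ Type _) ⥤ D} {R : D ⥤ Cᵒᵖ ⥤ Type _} (adj : L ⊣ R)
    (X : Cᵒᵖ ⥤ Type _) (c : C) :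
    IsIso ((adj.unit.app X).app (Opposite.op c)) ↔
      Function.Bijective (fun f : yoneda.obj c ⟶ X => L.map f) := by
  have yoneda_comp : (adj.unit.app X).app (Opposite.op c) ∘ yonedaEquiv =
      yonedaEquiv ∘ fun f : yoneda.obj c ⟶ X => f ≫ adj.unit.app X := rfl
  have homEquiv_map : adj.homEquiv _ _ ∘ (fun f : yoneda.obj c ⟶ X => L.map f) =
      fun f => f ≫ adj.unit.app X := by
    funext f
    exact (adj.homEquiv_unit _ _ _).trans (adj.unit.naturality f).symm
  rw [isIso_iff_bijective, ← Function.Bijective.of_comp_iff _ yonedaEquiv.bijective, yoneda_comp,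
    Function.Bijective.of_comp_iff' yonedaEquiv.bijective]
  exact homEquiv_map ▸ Function.Bijective.of_comp_iff' (Equiv.bijective _) _

namespace Globe

/-- `face false h` is `σ` and `face true h` is `τ`. -/
def face {a b : ℕ} : Bool → a < b → (gl a ⟶ gl b)
  | false, h => GlobeHom.sig h
  | true, h => GlobeHom.tau h

lemma face_comp_face {a b c : ℕ} (e e' : Bool) (h : a < b) (h' : b < c) :
    face e h ≫ face e' h' = face e (h.trans h') := by
  cases e <;> cases e' <;> rfl

def isTau {a b : ℕ} : GlobeHom a b → Bool
  | .tau _ => true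
  | _ => false

lemma isTau_face {a b : ℕ} (e : Bool) (h : a < b) : isTau (face e h) = e := by
  cases e <;> rfl

lemma face_isTau {a b : ℕ} (h : a < b) (g : GlobeHom a b) : face (isTau g) h = g := by
  cases g with
  | ident => omega
  | sig => rfl
  | tau => rfl

lemma hom_eq_id {a : ℕ} (g : GlobeHom a a) : (g : gl a ⟶ gl a) = 𝟙 (gl a) := by
  cases g with
  | ident => rfl
  | sig h | tau h => omega

def faceLE {a b : ℕ} (e : Bool) (h : a ≤ b) : gl a ⟶ gl b :=
  if h' : a < b then face e h' else eqToHom (congrArg gl (h.antisymm (not_lt.mp h')))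

lemma faceLE_of_lt {a b : ℕ} (e : Bool) (h : a ≤ b) (h' : a < b) : faceLE e h = face e h' :=
  dif_pos h'

lemma faceLE_self (e : Bool) (a : ℕ) : faceLE e (le_refl a) = 𝟙 (gl a) :=
  dif_neg (lt_irrefl a)

lemma face_comp_faceLE {a b c : ℕ} (e e' : Bool) (h : a < b) (h' : b ≤ c) :
    face e h ≫ faceLE e' h' = face e (h.trans_le h') := by
  obtain h' | rfl := h'.lt_or_eq
  · rw [faceLE_of_lt e' _ h', face_comp_face]
  · rw [faceLE_self, Category.comp_id]

lemma faceLE_comp_face {a b c : ℕ} (e : Bool) (h : a ≤ b) (h' : b < c) :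
    faceLE e h ≫ face e h' = face e (h.trans_lt h') := by
  obtain h | rfl := h.lt_or_eq
  · rw [faceLE_of_lt e _ h, face_comp_face]
  · rw [faceLE_self, Category.id_comp]

end Globe

open Globe

lemma map_op_map_op {C : Type*} [Category C] (X : Cᵒᵖ ⥤ Type*) {a b c : C} (f : a ⟶ b)
    (g : b ⟶ c) (x : X.obj (op c)) :
    X.map f.op (X.map g.op x) = X.map (f ≫ g).op x := by
  rw [op_comp, Functor.map_comp_apply]

lemma gsrc_eq (X : GlobSet) (k : ℕ) : gsrc X k = X.map (face false k.lt_succ_self).op := rfl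

lemma gtgt_eq (X : GlobSet) (k : ℕ) : gtgt X k = X.map (face true k.lt_succ_self).op := rfl

lemma Parallel.refl (X : GlobSet) : ∀ (k : ℕ) (x : X.obj (op (gl k))), Parallel X k x x
  | 0, _ => trivial
  | _ + 1, _ => ⟨rfl, rfl⟩

lemma Parallel.map_face {X : GlobSet} {k : ℕ} {x y : X.obj (op (gl k))} (hxy : Parallel X k x y)
    (e : Bool) {a : ℕ} (h : a < k) : X.map (face e h).op x = X.map (face e h).op y := by
  obtain _ | k := k
  · omega
  obtain ⟨hs, ht⟩ := hxy
  obtain h' | rfl := Nat.lt_succ_iff.mp h |>.lt_or_eq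
  · rw [← face_comp_face e false h' k.lt_succ_self, ← map_op_map_op, ← map_op_map_op,
      ← gsrc_eq, hs]
  · cases e
    exacts [hs, ht]

lemma parallel_map_face_map_face (X : GlobSet) {k m : ℕ} (h : k < m) (c : X.obj (op (gl m))) :
    Parallel X k (X.map (face false h).op c) (X.map (face true h).op c) := by
  obtain _ | k := k
  · trivial
  · constructor <;> simp only [gsrc_eq, gtgt_eq, map_op_map_op, face_comp_face]

def parallelPairs (X : GlobSet) (k : ℕ) : Set (X.obj (op (gl k)) × X.obj (op (gl k))) :=
  {p | Parallel X k p.1 p.2}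

def srcTgt (X : GlobSet) {k m : ℕ} (h : k < m) : X.obj (op (gl m)) → parallelPairs X k :=
  Set.codRestrict (fun c => (X.map (face false h).op c, X.map (face true h).op c)) _
    (parallel_map_face_map_face X h)

@[simp]
lemma coe_srcTgt (X : GlobSet) {k m : ℕ} (h : k < m) (c : X.obj (op (gl m))) :
    (srcTgt X h c : X.obj (op (gl k)) × X.obj (op (gl k))) =
      (X.map (face false h).op c, X.map (face true h).op c) :=
  rfl

lemma bijective_srcTgt_succ_iff (X : GlobSet) (k : ℕ) :
    Function.Bijective (srcTgt X k.lt_succ_self) ↔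
      Function.Injective (fun c : X.obj (op (gl (k+1))) => (gsrc X k c, gtgt X k c)) ∧
        Set.range (fun c : X.obj (op (gl (k+1))) => (gsrc X k c, gtgt X k c)) =
          {p : X.obj (op (gl k)) × X.obj (op (gl k)) | Parallel X k p.1 p.2} :=
  and_congr (Set.injective_codRestrict _) (Set.surjective_codRestrict _)

section

variable {X : GlobSet} {k : ℕ}

lemma Parallel.eq_of_injective_srcTgt (hk : Function.Injective (srcTgt X k.lt_succ_self))
    {x y : X.obj (op (gl (k + 1)))} (hxy : Parallel X (k + 1) x y) : x = y :=
  hk (Subtype.ext (Prod.ext hxy.1 hxy.2))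

def parallelPairBoundary (X : GlobSet) (k : ℕ) : parallelPairs X (k + 1) → parallelPairs X k :=
  fun p => srcTgt X k.lt_succ_self p.1.1

lemma srcTgt_eq_parallelPairBoundary_comp {m : ℕ} (h : k + 1 < m) :
    srcTgt X (k.lt_succ_self.trans h) = parallelPairBoundary X k ∘ srcTgt X h := by
  funext c
  ext <;> simp only [coe_srcTgt, parallelPairBoundary, Function.comp_apply, map_op_map_op,
    face_comp_face]

lemma bijective_parallelPairBoundary (hk : Function.Bijective (srcTgt X k.lt_succ_self)) :
    Function.Bijective (parallelPairBoundary X k) := by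
  have eq_fst (p : parallelPairs X (k + 1)) : p.1.2 = p.1.1 :=
    (p.2.eq_of_injective_srcTgt hk.injective).symm
  refine ⟨fun p q hpq => Subtype.ext (Prod.ext (hk.injective hpq) ?_), fun r => ?_⟩
  · rw [eq_fst p, eq_fst q]
    exact hk.injective hpq
  · obtain ⟨x, rfl⟩ := hk.surjective r
    exact ⟨⟨(x, x), Parallel.refl X _ x⟩, rfl⟩

lemma bijective_srcTgt_iff_of_bijective (hk : Function.Bijective (srcTgt X k.lt_succ_self))
    {m : ℕ} (h : k + 1 < m) :
    Function.Bijective (srcTgt X (k.lt_succ_self.trans h)) ↔ Function.Bijective (srcTgt X h) := by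
  rw [srcTgt_eq_parallelPairBoundary_comp h,
    Function.Bijective.of_comp_iff' (bijective_parallelPairBoundary hk)]

end

lemma forall_bijective_srcTgt_iff (X : GlobSet) (n : ℕ) :
    (∀ m (h : n < m), Function.Bijective (srcTgt X h)) ↔
      ∀ k, n ≤ k → Function.Bijective (srcTgt X k.lt_succ_self) := by
  refine ⟨fun H k hk => ?_, fun H m h => ?_⟩
  · suffices ∀ k, n ≤ k → ∀ m (h : k < m), Function.Bijective (srcTgt X h) from
      this k hk _ k.lt_succ_self
    intro k hk
    induction k, hk using Nat.le_induction with
    | base => exact H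
    | succ k _ ih =>
      exact fun m h => (bijective_srcTgt_iff_of_bijective (ih _ k.lt_succ_self) h).mp (ih m _)
  · suffices ∀ d k m (h : k < m), n ≤ k → m = k + d + 1 →
        Function.Bijective (srcTgt X h) by
      obtain ⟨d, rfl⟩ := Nat.exists_eq_add_of_lt h
      exact this d n _ h le_rfl rfl
    intro d
    induction d with
    | zero => rintro k _ _ hk rfl; exact H k hk
    | succ d ih =>
      rintro k m h hk rfl
      exact (bijective_srcTgt_iff_of_bijective (m := k + (d + 1) + 1) (H k hk) (by omega)).mpr
        (ih (k + 1) _ _ (hk.trans k.le_succ) (by omega))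

def glLE (n a : ℕ) (h : a ≤ n) : GlobeLE n := ⟨gl a, h⟩

instance (n : ℕ) : (iotaGlobe n).Full := ObjectProperty.full_ι _

instance (n : ℕ) : (iotaGlobe n).Faithful := ObjectProperty.faithful_ι _

lemma isIso_iotaAdj_unit_app_app_of_le (n : ℕ) (X : GlobSet) {m : ℕ} (h : m ≤ n) :
    IsIso (((iotaAdj n).unit.app X).app (op (gl m))) := by
  have unit_comp_counit :=
    (iotaGlobe n).op.ranCounit_app_app_ranAdjunction_unit_app_app (H := Type) X (op (glLE n m h))
  -- instance search does not recognise the counit in `unit_comp_counit`, so it is supplied by hand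
  have counit_iso : IsIso ((((iotaGlobe n).op.ranCounit (H := Type)).app
      ((iotaGlobe n).op ⋙ X)).app (op (glLE n m h))) := inferInstance
  exact @IsIso.of_isIso_fac_right _ _ _ _ _ _ _ _ counit_iso (IsIso.id _) unit_comp_counit

section restriction

variable (X : GlobSet) {n m : ℕ}

lemma restrict_naturality_apply
    (α : (iotaStar n).obj (yoneda.obj (gl m)) ⟶ (iotaStar n).obj X) {a b : ℕ} (ha : a ≤ n)
    (hb : b ≤ n) (u : gl a ⟶ gl b) (g : gl b ⟶ gl m) :
    α.app (op (glLE n a ha)) (u ≫ g : gl a ⟶ gl m) =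
      X.map u.op (α.app (op (glLE n b hb)) g) :=
  NatTrans.naturality_apply α (X := op (glLE n b hb)) (Y := op (glLE n a ha))
    (ObjectProperty.homMk u).op g

lemma map_face_restrict_app (hm : n < m)
    (α : (iotaStar n).obj (yoneda.obj (gl m)) ⟶ (iotaStar n).obj X) (e e' : Bool) {a : ℕ}
    (ha : a < n) :
    X.map (face e ha).op (α.app (op (glLE n n le_rfl)) (face e' hm)) =
      α.app (op (glLE n a ha.le)) (face e (ha.trans hm)) := by
  have := restrict_naturality_apply X α ha.le le_rfl (face e ha) (face e' hm)
  rw [face_comp_face] at this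
  exact this.symm

lemma parallel_restrict_app (hm : n < m)
    (α : (iotaStar n).obj (yoneda.obj (gl m)) ⟶ (iotaStar n).obj X) :
    Parallel X n (α.app (op (glLE n n le_rfl)) (face false hm))
      (α.app (op (glLE n n le_rfl)) (face true hm)) := by
  obtain _ | k := n
  · trivial
  · exact ⟨(map_face_restrict_app X hm α false false _).trans
        (map_face_restrict_app X hm α false true _).symm,
      (map_face_restrict_app X hm α true false _).trans
        (map_face_restrict_app X hm α true true _).symm⟩

/-- The components of the morphism `ι_n^* D_m ⟶ ι_n^* X` classified by the parallel pair `p`. -/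
def restrictOfParallelApp (p : X.obj (op (gl n)) × X.obj (op (gl n))) {a : ℕ} (ha : a ≤ n)
    (g : gl a ⟶ gl m) : X.obj (op (gl a)) :=
  X.map (faceLE (isTau g) ha).op (bif isTau g then p.2 else p.1)

lemma restrictOfParallelApp_face (p : X.obj (op (gl n)) × X.obj (op (gl n))) {a : ℕ}
    (ha : a ≤ n) (e : Bool) (h : a < m) :
    restrictOfParallelApp X p ha (face e h) = X.map (faceLE e ha).op (bif e then p.2 else p.1) := by
  rw [restrictOfParallelApp, isTau_face]

lemma restrictOfParallelApp_self (hm : n < m) (p : X.obj (op (gl n)) × X.obj (op (gl n)))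
    (e : Bool) : restrictOfParallelApp X p le_rfl (face e hm) = bif e then p.2 else p.1 := by
  rw [restrictOfParallelApp_face, faceLE_self, op_id, Functor.map_id_apply]

lemma restrictOfParallelApp_comp (hm : n < m) {p : X.obj (op (gl n)) × X.obj (op (gl n))}
    (hp : Parallel X n p.1 p.2) {a b : ℕ} (ha : a ≤ n) (hb : b ≤ n) (u : gl a ⟶ gl b)
    (g : gl b ⟶ gl m) :
    restrictOfParallelApp X p ha (u ≫ g) = X.map u.op (restrictOfParallelApp X p hb g) := by
  obtain rfl | hab := (GlobeHom.le (a := a) (b := b) u).eq_or_lt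
  · rw [hom_eq_id (a := a) u, Category.id_comp, op_id, Functor.map_id_apply]
  obtain ⟨e, rfl⟩ : ∃ e, face e hab = u := ⟨_, face_isTau hab u⟩
  obtain ⟨e', rfl⟩ : ∃ e', face e' (hb.trans_lt hm) = g := ⟨_, face_isTau _ g⟩
  rw [face_comp_face, restrictOfParallelApp_face, restrictOfParallelApp_face, map_op_map_op,
    face_comp_faceLE, faceLE_of_lt e ha (hab.trans_le hb)]
  cases e <;> cases e'
  exacts [rfl, hp.map_face _ _, (hp.map_face _ _).symm, rfl]

lemma restrictOfParallelApp_restrict_app (hm : n < m)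
    (α : (iotaStar n).obj (yoneda.obj (gl m)) ⟶ (iotaStar n).obj X) {a : ℕ} (ha : a ≤ n)
    (g : gl a ⟶ gl m) :
    restrictOfParallelApp X (α.app (op (glLE n n le_rfl)) (face false hm),
      α.app (op (glLE n n le_rfl)) (face true hm)) ha g = α.app (op (glLE n a ha)) g := by
  obtain ⟨e, rfl⟩ : ∃ e, face e (ha.trans_lt hm) = g := ⟨_, face_isTau _ g⟩
  have := restrict_naturality_apply X α ha le_rfl (faceLE e ha) (face e hm)
  rw [faceLE_comp_face] at this
  refine (restrictOfParallelApp_face X _ ha e _).trans ?_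
  cases e <;> exact this.symm

/-- Since `n < m`, the restricted disk `ι_n^* D_m` has exactly the two cells `σ` and `τ` in
each dimension `a ≤ n`. -/
def restrictHomEquiv (hm : n < m) :
    ((iotaStar n).obj (yoneda.obj (gl m)) ⟶ (iotaStar n).obj X) ≃ parallelPairs X n where
  toFun α := ⟨(α.app (op (glLE n n le_rfl)) (face false hm),
    α.app (op (glLE n n le_rfl)) (face true hm)), parallel_restrict_app X hm α⟩
  invFun p :=
    { app j := TypeCat.ofHom (restrictOfParallelApp X p.1 j.unop.property)
      naturality j j' u := by
        ext g
        exact restrictOfParallelApp_comp X hm p.2 _ _ u.unop.hom g }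
  left_inv α := by
    ext j g
    exact restrictOfParallelApp_restrict_app X hm α j.unop.property g
  right_inv p := by
    ext
    exacts [restrictOfParallelApp_self X hm p.1 false, restrictOfParallelApp_self X hm p.1 true]

end restriction

lemma restrictHomEquiv_iotaStar_map (X : GlobSet) {n m : ℕ} (hm : n < m)
    (f : yoneda.obj (gl m) ⟶ X) :
    restrictHomEquiv X hm ((iotaStar n).map f) = srcTgt X hm (yonedaEquiv f) := by
  ext
  exacts [NatTrans.naturality_apply f (face false hm).op (𝟙 (gl m)),
    NatTrans.naturality_apply f (face true hm).op (𝟙 (gl m))]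

lemma bijective_iotaStar_map_iff (X : GlobSet) {n m : ℕ} (hm : n < m) :
    Function.Bijective (fun f : yoneda.obj (gl m) ⟶ X => (iotaStar n).map f) ↔
      Function.Bijective (srcTgt X hm) := by
  have : restrictHomEquiv X hm ∘ (fun f : yoneda.obj (gl m) ⟶ X => (iotaStar n).map f) =
      srcTgt X hm ∘ yonedaEquiv :=
    funext (restrictHomEquiv_iotaStar_map X hm)
  rw [← (restrictHomEquiv X hm).bijective.of_comp_iff', this,
    Function.Bijective.of_comp_iff _ yonedaEquiv.bijective]

lemma isCoskeletal_iff_forall_bijective_srcTgt (n : ℕ) (X : GlobSet) :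
    IsCoskeletal n X ↔ ∀ m (hm : n < m), Function.Bijective (srcTgt X hm) := by
  rw [IsCoskeletal, NatTrans.isIso_iff_isIso_app]
  refine ⟨fun H m hm => ?_, fun H j => ?_⟩
  · rw [← bijective_iotaStar_map_iff, ← (iotaAdj n).isIso_unit_app_app_iff]
    exact H _
  · obtain h | h := le_or_gt (gval j.unop) n
    · exact isIso_iotaAdj_unit_app_app_of_le n X h
    · rw [(iotaAdj n).isIso_unit_app_app_iff X j.unop]
      exact (bijective_iotaStar_map_iff X h).mpr (H _ h)

/-- A globular set is `n`-coskeletal iff for every `k ≥ n` the map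
`X_{k+1} → X_k × X_k, c ↦ (s c, t c)` is injective with image exactly the set of parallel
pairs of `k`-cells: each parallel pair admits exactly one filling `(k+1)`-cell. -/
theorem statement5 (n : ℕ) (X : GlobSet) :
    IsCoskeletal n X ↔
      ∀ k : ℕ, n ≤ k →
        Function.Injective (fun c : X.obj (op (gl (k+1))) => (gsrc X k c, gtgt X k c)) ∧
        Set.range (fun c : X.obj (op (gl (k+1))) => (gsrc X k c, gtgt X k c)) =
          {p : X.obj (op (gl k)) × X.obj (op (gl k)) | Parallel X k p.1 p.2} := by
  rw [isCoskeletal_iff_forall_bijective_srcTgt, forall_bijective_srcTgt_iff]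
  exact forall₂_congr fun k _ => bijective_srcTgt_succ_iff X k
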